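/- Let f : X → X be a refinement expansive homeomorphism of a T1 topological space X. Then X has a countable basis for its topology. -/

import Mathlib

open Set

/-- The `n`-th iterate (`n : ℤ`) of a homeomorphism `f`, as a function. -/
def Homeomorph.zpow {X : Type*} [TopologicalSpace X] (f : X ≃ₜ X) (n : ℤ) : X → X :=
  ⇑(f.toEquiv ^ n)

/-- `U = {U 0, …, U (l-1)}` is an o-expansive covering for the homeomorphism `f`:
it is a finite open cover such that any two points whose whole orbits stay
`U`-close must coincide. -/
def IsOExpansiveCover {X : Type*} [TopologicalSpace X] {l : ℕ} (f : X ≃ₜ X)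
    (U : Fin l → Set X) : Prop :=
  (∀ i, IsOpen (U i)) ∧ (⋃ i, U i) = Set.univ ∧
    ∀ x y : X, (∀ n : ℤ, ∃ i, f.zpow n x ∈ U i ∧ f.zpow n y ∈ U i) → x = y

/-- A homeomorphism is orbit expansive if it admits an o-expansive covering. -/
def OrbitExpansive {X : Type*} [TopologicalSpace X] (f : X ≃ₜ X) : Prop :=
  ∃ (l : ℕ) (U : Fin l → Set X), IsOExpansiveCover f U

/-- `U` is an r-expansivity covering for `f`: a finite open cover such that for every
open cover `V` and every sequence `k : ℤ → Fin n` there is `N` with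
`⋂_{|j| ≤ N} f^j(U (k j))` contained in a member of `V`. -/
def IsRExpansiveCover {X : Type*} [TopologicalSpace X] {n : ℕ} (f : X ≃ₜ X)
    (U : Fin n → Set X) : Prop :=
  (∀ i, IsOpen (U i)) ∧ (⋃ i, U i) = Set.univ ∧
    ∀ V : Set (Set X), (∀ v ∈ V, IsOpen v) → ⋃₀ V = Set.univ →
      ∀ k : ℤ → Fin n, ∃ N : ℕ, ∃ v ∈ V,
        (⋂ j ∈ Set.Icc (-(N : ℤ)) (N : ℤ), f.zpow j '' U (k j)) ⊆ v

/-- A homeomorphism is refinement expansive if it admits an r-expansivity covering. -/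
def RefinementExpansive {X : Type*} [TopologicalSpace X] (f : X ≃ₜ X) : Prop :=
  ∃ (n : ℕ) (U : Fin n → Set X), IsRExpansiveCover f U

/-- `U` is a uniform r-expansivity covering for `f`: `N` can be chosen uniformly in the
sequence `k`. -/
def IsUniformRExpansiveCover {X : Type*} [TopologicalSpace X] {n : ℕ} (f : X ≃ₜ X)
    (U : Fin n → Set X) : Prop :=
  (∀ i, IsOpen (U i)) ∧ (⋃ i, U i) = Set.univ ∧
    ∀ V : Set (Set X), (∀ v ∈ V, IsOpen v) → ⋃₀ V = Set.univ →
      ∃ N : ℕ, ∀ k : ℤ → Fin n, ∃ v ∈ V,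
        (⋂ j ∈ Set.Icc (-(N : ℤ)) (N : ℤ), f.zpow j '' U (k j)) ⊆ v

/-- A homeomorphism is uniformly refinement expansive if it admits a uniform
r-expansivity covering. -/
def UniformlyRefinementExpansive {X : Type*} [TopologicalSpace X] (f : X ≃ₜ X) : Prop :=
  ∃ (n : ℕ) (U : Fin n → Set X), IsUniformRExpansiveCover f U

/-! The cylinders `⋂_{|j| ≤ N} f^j(U (w j))` over the finite words `w` form a countable family of
open sets. Given `x ∈ V` with `V` open, `{V, {x}ᶜ}` is an open cover because `X` is `T₁`, and
r-expansivity along an itinerary of `x` yields a cylinder around `x` inside one of its members,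
necessarily `V`. -/

namespace Homeomorph

variable {X : Type*} [TopologicalSpace X]

theorem zpow_eq_coe_zpow (f : X ≃ₜ X) (j : ℤ) : f.zpow j = ⇑(f ^ j) := by
  let toPerm : (X ≃ₜ X) →* Equiv.Perm X := ⟨⟨toEquiv, rfl⟩, fun _ _ => rfl⟩
  exact congrArg DFunLike.coe (map_zpow toPerm f j).symm

theorem isOpenMap_zpow (f : X ≃ₜ X) (j : ℤ) : IsOpenMap (f.zpow j) :=
  f.zpow_eq_coe_zpow j ▸ (f ^ j).isOpenMap

theorem zpow_zpow_neg (f : X ≃ₜ X) (j : ℤ) (x : X) : f.zpow j (f.zpow (-j) x) = x := by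
  simp [zpow_eq_coe_zpow, zpow_neg]

end Homeomorph

open TopologicalSpace

theorem isTopologicalBasis_of_forall_refines_openCover {X : Type*} [TopologicalSpace X]
    [T1Space X] {B : Set (Set X)} (hB : ∀ b ∈ B, IsOpen b)
    (hrefine : ∀ x : X, ∀ V : Set (Set X), (∀ v ∈ V, IsOpen v) → ⋃₀ V = univ →
      ∃ b ∈ B, x ∈ b ∧ ∃ v ∈ V, b ⊆ v) :
    IsTopologicalBasis B := by
  refine isTopologicalBasis_of_isOpen_of_nhds hB fun x V hxV hV => ?_
  have hcover : ⋃₀ {V, {x}ᶜ} = univ := by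
    refine eq_univ_of_forall fun y => ?_
    by_cases hy : y = x
    · exact ⟨V, mem_insert _ _, hy ▸ hxV⟩
    · exact ⟨{x}ᶜ, mem_insert_of_mem _ rfl, hy⟩
  obtain ⟨b, hbB, hxb, v, hv, hbv⟩ :=
    hrefine x {V, {x}ᶜ} (by rintro v (rfl | rfl); exacts [hV, isOpen_compl_singleton]) hcover
  rcases hv with rfl | rfl
  · exact ⟨b, hbB, hxb, hbv⟩
  · exact (hbv hxb rfl).elim

section Cylinder

variable {X ι : Type*} [TopologicalSpace X] (f : X ≃ₜ X) (U : ι → Set X)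

def cylinder (N : ℕ) (w : Icc (-(N : ℤ)) N → ι) : Set X :=
  ⋂ j : Icc (-(N : ℤ)) N, f.zpow j '' U (w j)

variable {f U}

theorem isOpen_cylinder (hU : ∀ i, IsOpen (U i)) (N : ℕ) (w : Icc (-(N : ℤ)) N → ι) :
    IsOpen (cylinder f U N w) :=
  isOpen_iInter_of_finite fun j => f.isOpenMap_zpow j _ (hU _)

theorem isTopologicalBasis_cylinder [T1Space X] {n : ℕ} {U : Fin n → Set X}
    (hU : IsRExpansiveCover f U) :
    IsTopologicalBasis (range fun p : Σ N : ℕ, Icc (-(N : ℤ)) N → Fin n =>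
      cylinder f U p.1 p.2) := by
  obtain ⟨hUopen, hUcover, hUrefine⟩ := hU
  refine isTopologicalBasis_of_forall_refines_openCover
    (forall_mem_range.2 fun p => isOpen_cylinder hUopen p.1 p.2) fun x V hVopen hVcover => ?_
  have hitinerary : ∀ j : ℤ, ∃ i, f.zpow (-j) x ∈ U i := fun j =>
    mem_iUnion.1 (hUcover ▸ mem_univ _)
  choose k hk using hitinerary
  obtain ⟨N, v, hv, hsub⟩ := hUrefine V hVopen hVcover k
  refine ⟨cylinder f U N fun j => k j, ⟨⟨N, fun j => k j⟩, rfl⟩, ?_, v, hv, ?_⟩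
  · exact mem_iInter.2 fun j => ⟨_, hk j, f.zpow_zpow_neg j x⟩
  · rwa [biInter_eq_iInter] at hsub

end Cylinder

/-- Theorem 3.11 (second part): a `T₁` space admitting a refinement expansive
homeomorphism has a countable basis for its topology. -/
theorem secondCountable_of_refinementExpansive {X : Type*} [TopologicalSpace X]
    [T1Space X] (f : X ≃ₜ X) (hf : RefinementExpansive f) :
    SecondCountableTopology X := by
  obtain ⟨n, U, hU⟩ := hf
  exact (isTopologicalBasis_cylinder hU).secondCountableTopology (countable_range _)
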